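/- arXiv:2207.09687 — 2 statements merged into one kernel-verified Lean document; each statement's English description precedes it below -/
import Mathlib

section
/- Let M = Z^d with standard basis e₁,…,e_d, let ρ = (−(d−1)/2, −(d−3)/2, …, (d−1)/2) ∈ Q^d, and let χ₀ = (1,…,1). For t ∈ R, the intersection of the set { Σ_{i>j} c_{ij}(e_i − e_j) + t·χ₀ : −1 ≤ c_{ij} ≤ 0 } ⊂ R^d with the dominant cone { x₁ ≤ x₂ ≤ ⋯ ≤ x_d } consists exactly of the single point t·χ₀. -/
/-! The first coordinate of `Σ_{i>j} c_{ij}(e_i - e_j)` is `-Σ_i c_{i1} ≥ 0` and its last coordinate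
is `Σ_j c_{dj} ≤ 0`. A dominant vector has its smallest coordinate first and its largest last, so
every coordinate of a dominant point of the shifted polytope lies between `t` and `t`. -/

section PositiveRootCombination

variable {ι : Type*} [Fintype ι] [LinearOrder ι]

def positiveRootCombination (c : ι → ι → ℝ) : ι → ℝ :=
  ∑ i, ∑ j, if j < i then c i j • (Pi.single i 1 - Pi.single j 1 : ι → ℝ) else 0

lemma positiveRootCombination_apply (c : ι → ι → ℝ) (k : ι) :
    positiveRootCombination c k = ∑ j with j < k, c k j - ∑ i with k < i, c i k := by
  have term_apply : ∀ i j,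
      (if j < i then c i j • (Pi.single i 1 - Pi.single j 1 : ι → ℝ) else 0) k =
        (if k = i then (if j < k then c k j else 0) else 0) -
          (if k = j then (if k < i then c i k else 0) else 0) := by
    intro i j
    split_ifs <;> simp_all <;> grind
  simp [positiveRootCombination, Finset.sum_apply, term_apply, Finset.sum_sub_distrib,
    Finset.sum_ite_irrel, Finset.sum_filter]

variable {c : ι → ι → ℝ}

lemma positiveRootCombination_nonneg_of_isMin (hc : ∀ i j, j < i → c i j ≤ 0) {k : ι}
    (hk : IsMin k) : 0 ≤ positiveRootCombination c k := by
  have h_empty : ({j | j < k} : Finset ι) = ∅ := Finset.filter_false_of_mem fun j _ => hk.not_lt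
  rw [positiveRootCombination_apply, h_empty, Finset.sum_empty, zero_sub, neg_nonneg]
  exact Finset.sum_nonpos fun i hi => hc i k (Finset.mem_filter.mp hi).2

lemma positiveRootCombination_nonpos_of_isMax (hc : ∀ i j, j < i → c i j ≤ 0) {k : ι}
    (hk : IsMax k) : positiveRootCombination c k ≤ 0 := by
  have h_empty : ({i | k < i} : Finset ι) = ∅ := Finset.filter_false_of_mem fun i _ => hk.not_lt
  rw [positiveRootCombination_apply, h_empty, Finset.sum_empty, sub_zero]
  exact Finset.sum_nonpos fun j hj => hc k j (Finset.mem_filter.mp hj).2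

end PositiveRootCombination

lemma Monotone.eq_const_of_isMin_of_isMax {ι α : Type*} [Preorder ι] [Finite ι] [PartialOrder α]
    {x : ι → α} {a : α} (hx : Monotone x) (hmin : ∀ m, IsMin m → a ≤ x m)
    (hmax : ∀ m, IsMax m → x m ≤ a) : x = fun _ => a := by
  funext k
  obtain ⟨m, hmk, hm⟩ := Finite.exists_le_minimal (p := fun _ : ι => True) (a := k) trivial
  obtain ⟨M, hkM, hM⟩ := Finite.exists_le_maximal (p := fun _ : ι => True) (a := k) trivial
  exact le_antisymm ((hx hkM).trans (hmax M (maximal_true.mp hM)))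
    ((hmin m (minimal_true.mp hm)).trans (hx hmk))

theorem weight_polytope_inter_dominant_general (d : ℕ) (t : ℝ) :
    {x : Fin d → ℝ |
        (∃ c : Fin d → Fin d → ℝ, (∀ i j : Fin d, j < i → c i j ∈ Set.Icc (-1 : ℝ) 0) ∧
          x = (∑ i : Fin d, ∑ j : Fin d,
                if j < i then c i j • (Pi.single i (1 : ℝ) - Pi.single j 1) else 0)
              + fun _ => t) ∧ Monotone x}
      = {fun _ => t} := by
  ext x
  simp only [Set.mem_ofPred_eq, Set.mem_singleton_iff]
  constructor
  · rintro ⟨⟨c, hc, rfl⟩, hmono⟩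
    have hc_nonpos : ∀ i j, j < i → c i j ≤ 0 := fun i j h => (hc i j h).2
    exact hmono.eq_const_of_isMin_of_isMax
      (fun m hm => le_add_of_nonneg_left (positiveRootCombination_nonneg_of_isMin hc_nonpos hm))
      (fun m hm => add_le_of_nonpos_left (positiveRootCombination_nonpos_of_isMax hc_nonpos hm))
  · rintro rfl
    exact ⟨⟨0, fun i j _ => by simp, by simp⟩, monotone_const⟩

/-- `(Σ(d)/2 - ρ + tχ₀) ∩ M⁺ = {tχ₀}` : the set of vectors
`Σ_{i>j} c_{ij}(e_i - e_j) + t·(1,…,1)` with `-1 ≤ c_{ij} ≤ 0`, intersected with the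
dominant cone `x₁ ≤ ⋯ ≤ x_d`, is exactly the single point `t·(1,…,1)`. -/
theorem weight_polytope_inter_dominant (d : ℕ) (hd : 1 ≤ d) (t : ℝ) :
    {x : Fin d → ℝ |
        (∃ c : Fin d → Fin d → ℝ, (∀ i j : Fin d, j < i → c i j ∈ Set.Icc (-1 : ℝ) 0) ∧
          x = (∑ i : Fin d, ∑ j : Fin d,
                if j < i then c i j • (Pi.single i (1 : ℝ) - Pi.single j 1) else 0)
              + fun _ => t) ∧ Monotone x}
      = {fun _ => t} :=
  weight_polytope_inter_dominant_general d t
end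

section
/- For real numbers a > 0, t = a/2 − ε with 0 < ε < 1/2, and d ≥ 1: the set of integer points χ ∈ Z^d lying in { Σ_i c_i e_i + Σ_{i>j} c'_{ij}(e_i − e_j) + t·χ₀ : −a/2 ≤ c_i ≤ a/2, −1 ≤ c'_{ij} ≤ 0 } and in the dominant cone {x₁ ≤ ⋯ ≤ x_d} equals { (x₁,…,x_d) ∈ Z^d : 0 ≤ x₁ ≤ ⋯ ≤ x_d ≤ a−1 }, when a is a positive integer. -/
/-!
Write a window point as `c + ∑_{j<i} c'ᵢⱼ (eᵢ - eⱼ) + t χ₀` with `t = a/2 - ε`. Since `c'ᵢⱼ ≤ 0`,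
the root part is `≤ 0` at a largest index (where `eᵢ` only enters with sign `+`) and `≥ 0` at a
smallest one (where `eⱼ` only enters with sign `-`). For a dominant weight, monotonicity squeezes
every coordinate between these two, hence into `[t - a/2, t + a/2] = [-ε, a - ε]`, whose integer
points are `0, …, a - 1`. Conversely such a weight is `(χ - t χ₀) + 0 + t χ₀`.
-/

open Finset

section PositiveRoots

variable {ι : Type*} [Fintype ι] [LinearOrder ι]

noncomputable def posRootSum (c' : ι → ι → ℝ) : ι → ℝ :=
  ∑ i, ∑ j, if j < i then c' i j • (Pi.single i (1 : ℝ) - Pi.single j 1) else 0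

@[simp]
lemma posRootSum_zero : posRootSum (0 : ι → ι → ℝ) = 0 := by
  simp [posRootSum]

lemma posRootSum_apply (c' : ι → ι → ℝ) (m : ι) :
    posRootSum c' m = ∑ j with j < m, c' m j - ∑ i with m < i, c' i m := by
  have hsplit : ∀ i j,
      (if j < i then (if m = i then c' i j else 0) - (if m = j then c' i j else 0) else 0)
        = (if m = i then (if j < i then c' i j else 0) else 0)
          - (if m = j then (if j < i then c' i j else 0) else 0) := by
    intro i j; split_ifs <;> simp
  simp only [posRootSum, Finset.sum_apply, ite_apply, Pi.smul_apply, Pi.sub_apply, Pi.single_apply,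
    smul_eq_mul, mul_sub, mul_ite, mul_one, mul_zero, Pi.zero_apply, sum_filter]
  simp_rw [hsplit, sum_sub_distrib, sum_ite_eq, mem_univ, if_true]
  rw [sum_comm]
  simp

variable {c' : ι → ι → ℝ} {m : ι}

lemma posRootSum_nonpos_of_isMax (hc' : ∀ i j, j < i → c' i j ≤ 0) (hm : IsMax m) :
    posRootSum c' m ≤ 0 := by
  rw [posRootSum_apply, filter_false_of_mem fun i _ => hm.not_lt, sum_empty, sub_zero]
  exact sum_nonpos fun j hj => hc' m j (mem_filter.1 hj).2

lemma posRootSum_nonneg_of_isMin (hc' : ∀ i j, j < i → c' i j ≤ 0) (hm : IsMin m) :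
    0 ≤ posRootSum c' m := by
  rw [posRootSum_apply, filter_false_of_mem fun j _ => hm.not_lt, sum_empty, zero_sub,
    neg_nonneg]
  exact sum_nonpos fun i hi => hc' i m (mem_filter.1 hi).2

lemma Monotone.mem_Icc_of_eq_add_posRootSum {x c : ι → ℝ} {l u t : ℝ} (hx : Monotone x)
    (hc : ∀ i, c i ∈ Set.Icc l u) (hc' : ∀ i j, j < i → c' i j ≤ 0)
    (hxc : x = c + posRootSum c' + fun _ => t) (m : ι) : x m ∈ Set.Icc (l + t) (u + t) := by
  obtain ⟨M, hmM, hM⟩ := Finite.exists_le_maximal (p := fun _ => True) (a := m) trivial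
  obtain ⟨m₀, hm₀m, hm₀⟩ := Finite.exists_le_minimal (p := fun _ => True) (a := m) trivial
  have hxM : x M = c M + posRootSum c' M + t := congrFun hxc M
  have hxm₀ : x m₀ = c m₀ + posRootSum c' m₀ + t := congrFun hxc m₀
  have hrootM := posRootSum_nonpos_of_isMax hc' (maximal_true.1 hM)
  have hrootm₀ := posRootSum_nonneg_of_isMin hc' (minimal_true.1 hm₀)
  constructor <;> linarith [hx hmM, hx hm₀m, (hc M).2, (hc m₀).1]

end PositiveRoots

lemma Int.mem_Icc_of_cast_mem_Icc_sub {z n : ℤ} {ε : ℝ} (hε : 0 < ε) (hε' : ε < 1)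
    (hz : (z : ℝ) ∈ Set.Icc (-ε) (n - ε)) : z ∈ Set.Icc 0 (n - 1) := by
  have h0 : -1 < z := by exact_mod_cast (show ((-1 : ℤ) : ℝ) < z by push_cast; linarith [hz.1])
  have h1 : z < n := by exact_mod_cast (show (z : ℝ) < n by linarith [hz.2])
  exact ⟨by omega, by omega⟩

theorem magic_window_weights_general (a : ℕ) (ε : ℝ) (hε : 0 < ε) (hε' : ε < 1/2)
    (d : ℕ) :
    {χ : Fin d → ℤ |
        (∃ c : Fin d → ℝ, ∃ c' : Fin d → Fin d → ℝ,
          (∀ i : Fin d, c i ∈ Set.Icc (-(a : ℝ)/2) ((a : ℝ)/2)) ∧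
          (∀ i j : Fin d, j < i → c' i j ∈ Set.Icc (-1 : ℝ) 0) ∧
          (fun m => (χ m : ℝ))
            = (∑ i : Fin d, c i • (Pi.single i (1 : ℝ) : Fin d → ℝ))
              + (∑ i : Fin d, ∑ j : Fin d,
                  if j < i then c' i j • (Pi.single i (1 : ℝ) - Pi.single j 1) else 0)
              + fun _ => (a : ℝ)/2 - ε) ∧ Monotone χ}
      = {χ : Fin d → ℤ | Monotone χ ∧ ∀ i, 0 ≤ χ i ∧ χ i ≤ (a : ℤ) - 1} := by
  ext χ
  simp only [Set.mem_ofPred_eq]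
  constructor
  · rintro ⟨⟨c, c', hc, hc', hχ⟩, hmono⟩
    rw [← pi_eq_sum_univ' c] at hχ
    change _ = c + posRootSum c' + _ at hχ
    refine ⟨hmono, fun m => ?_⟩
    have hχℝ : Monotone fun m => (χ m : ℝ) := fun i j hij => Int.cast_mono (hmono hij)
    obtain ⟨hlo, hhi⟩ :=
      hχℝ.mem_Icc_of_eq_add_posRootSum hc (fun i j hji => (hc' i j hji).2) hχ m
    exact Int.mem_Icc_of_cast_mem_Icc_sub (n := a) hε (by linarith)
      ⟨by linarith, by push_cast; linarith⟩
  · rintro ⟨hmono, hχ⟩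
    refine ⟨⟨fun m => χ m - (a / 2 - ε), 0, fun i => ?_, fun i j _ => by simp, ?_⟩, hmono⟩
    · have h0 : (0 : ℝ) ≤ χ i := by exact_mod_cast (hχ i).1
      have h1 : (χ i : ℝ) ≤ a - 1 := by exact_mod_cast (hχ i).2
      constructor <;> linarith
    · rw [← pi_eq_sum_univ']
      change _ = _ + posRootSum 0 + _
      ext m
      simp

/-- The integer points of `(1/2)Σ_a(d) - ρ + tχ₀` (with `t = a/2 - ε`) lying in the
dominant cone are exactly the weakly increasing integer sequences with entries in
`[0, a-1]`. -/
theorem magic_window_weights (a : ℕ) (ha : 1 ≤ a) (ε : ℝ) (hε : 0 < ε) (hε' : ε < 1/2)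
    (d : ℕ) (hd : 1 ≤ d) :
    {χ : Fin d → ℤ |
        (∃ c : Fin d → ℝ, ∃ c' : Fin d → Fin d → ℝ,
          (∀ i : Fin d, c i ∈ Set.Icc (-(a : ℝ)/2) ((a : ℝ)/2)) ∧
          (∀ i j : Fin d, j < i → c' i j ∈ Set.Icc (-1 : ℝ) 0) ∧
          (fun m => (χ m : ℝ))
            = (∑ i : Fin d, c i • (Pi.single i (1 : ℝ) : Fin d → ℝ))
              + (∑ i : Fin d, ∑ j : Fin d,
                  if j < i then c' i j • (Pi.single i (1 : ℝ) - Pi.single j 1) else 0)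
              + fun _ => (a : ℝ)/2 - ε) ∧ Monotone χ}
      = {χ : Fin d → ℤ | Monotone χ ∧ ∀ i, 0 ≤ χ i ∧ χ i ≤ (a : ℤ) - 1} :=
  magic_window_weights_general a ε hε hε' d
end
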